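/- arXiv:2110.02162 — 2 statements merged into one kernel-verified Lean document; each statement's English description precedes it below -/
import Mathlib

section
/- Let B_4 be the braid group on 4 strands. If G is a finite group and f : B_4 → G is a surjective group homomorphism with G not cyclic, then 6 ≤ Nat.card G, and if Nat.card G = 6 then G is isomorphic to the symmetric group S_3 = Equiv.Perm (Fin 3). -/
/-- The braid relations on `n` strands, as elements of the free group on
`n - 1` generators (generator `i` corresponds to the half twist `σ_{i+1}`
in the usual 1-indexed notation). -/
def braidRels (n : ℕ) : Set (FreeGroup (Fin (n - 1))) :=
  { r | (∃ i j : Fin (n - 1), (j : ℕ) = (i : ℕ) + 1 ∧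
          r = FreeGroup.of i * FreeGroup.of j * FreeGroup.of i *
              (FreeGroup.of j * FreeGroup.of i * FreeGroup.of j)⁻¹) ∨
        (∃ i j : Fin (n - 1), (i : ℕ) + 2 ≤ (j : ℕ) ∧
          r = FreeGroup.of i * FreeGroup.of j * (FreeGroup.of j * FreeGroup.of i)⁻¹) }

/-- The braid group on `n` strands, presented by the Artin generators and the
braid and far-commutation relations. -/
def BraidGroup (n : ℕ) : Type := PresentedGroup (braidRels n)

instance (n : ℕ) : Group (BraidGroup n) :=
  inferInstanceAs (Group (PresentedGroup (braidRels n)))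

/-- The Artin generator `σ_k` (1-indexed, so `1 ≤ k ≤ n - 1`) of the braid group
`B_n`.  Out-of-range indices give the junk value `1`. -/
def braidGen (n k : ℕ) : BraidGroup n :=
  if h : k - 1 < n - 1 then PresentedGroup.of (⟨k - 1, h⟩ : Fin (n - 1)) else 1

/-- The transpositions corresponding to the Artin generators. -/
def braidPermGen (n : ℕ) (i : Fin (n - 1)) : Equiv.Perm (Fin n) :=
  Equiv.swap ⟨(i : ℕ), by have := i.isLt; omega⟩ ⟨(i : ℕ) + 1, by have := i.isLt; omega⟩

theorem braidPermGen_rels (n : ℕ) :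
    ∀ r ∈ braidRels n, FreeGroup.lift (braidPermGen n) r = 1 := by
  rintro r (⟨i, j, hij, rfl⟩ | ⟨i, j, hij, rfl⟩) <;>
    simp only [map_mul, map_inv, FreeGroup.lift_apply_of, mul_inv_eq_one]
  · -- braid relation
    have hi := i.isLt
    have hj := j.isLt
    unfold braidPermGen
    set a : Fin n := ⟨(i : ℕ), by omega⟩
    set b : Fin n := ⟨(i : ℕ) + 1, by omega⟩
    set c : Fin n := ⟨(j : ℕ) + 1, by omega⟩
    have hb : (⟨(j : ℕ), by omega⟩ : Fin n) = b := by simp [b, Fin.ext_iff, hij]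
    rw [hb]
    have hab : a ≠ b := by simp [a, b, Fin.ext_iff]
    have hac : a ≠ c := by simp [a, c, Fin.ext_iff]; omega
    have hbc : b ≠ c := by simp [b, c, Fin.ext_iff]; omega
    have h1 : Equiv.swap b c * Equiv.swap a b * Equiv.swap b c = Equiv.swap c a :=
      Equiv.swap_mul_swap_mul_swap hab hac
    have h2 : Equiv.swap b a * Equiv.swap c b * Equiv.swap b a = Equiv.swap a c :=
      Equiv.swap_mul_swap_mul_swap hbc.symm hac.symm
    rw [Equiv.swap_comm b a, Equiv.swap_comm c b] at h2
    rw [h1, h2, Equiv.swap_comm c a]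
  · -- far commutation
    have hi := i.isLt
    have hj := j.isLt
    unfold braidPermGen
    set a : Fin n := ⟨(i : ℕ), by omega⟩
    set b : Fin n := ⟨(i : ℕ) + 1, by omega⟩
    set c : Fin n := ⟨(j : ℕ), by omega⟩
    set d : Fin n := ⟨(j : ℕ) + 1, by omega⟩
    have hdisj : (Equiv.swap a b).Disjoint (Equiv.swap c d) := by
      intro x
      by_cases hx : x = a ∨ x = b
      · right
        rcases hx with rfl | rfl <;>
          exact Equiv.swap_apply_of_ne_of_ne
            (by simp [a, b, c, d, Fin.ext_iff]; omega)
            (by simp [a, b, c, d, Fin.ext_iff]; omega)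
      · left
        push_neg at hx
        exact Equiv.swap_apply_of_ne_of_ne hx.1 hx.2
    exact hdisj.commute

/-- The natural projection `π : B_n → S_n`, sending the Artin generator `σ_i`
to the adjacent transposition `(i, i+1)`. -/
def braidPi (n : ℕ) : BraidGroup n →* Equiv.Perm (Fin n) :=
  PresentedGroup.toGroup (braidPermGen_rels n)

/-!
In a commutative quotient of a braid group the braid relation `aba = bab` forces `a = b`, so
all Artin generators have the same image and the quotient is cyclic. A non-cyclic quotient is
therefore non-abelian, and groups of order less than `6` are abelian. A non-cyclic group of
order `6` acts faithfully on the three cosets of a subgroup `⟨y⟩` of order `2`: otherwise `⟨y⟩`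
is normal, hence central, and `y` times an element of order `3` generates the group.
Counting, `G` is then all of `Perm (G ⧸ ⟨y⟩) ≃ S₃`.
-/

namespace BraidGroup

variable {n : ℕ} {G : Type*} [Group G]

def of (i : Fin (n - 1)) : BraidGroup n :=
  PresentedGroup.of i

theorem closure_range_of : Subgroup.closure (Set.range (of (n := n))) = ⊤ :=
  PresentedGroup.closure_range_of _

theorem of_mul_of_mul_of {i j : Fin (n - 1)} (hij : (j : ℕ) = i + 1) :
    of i * of j * of i = of j * of i * (of j : BraidGroup n) := by
  have h := PresentedGroup.one_of_mem (rels := braidRels n) (Or.inl ⟨i, j, hij, rfl⟩)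
  simp only [map_mul, map_inv, mul_inv_eq_one] at h
  exact h

theorem map_of_succ [IsMulCommutative G] (f : BraidGroup n →* G) {i j : Fin (n - 1)}
    (hij : (j : ℕ) = i + 1) : f (of i) = f (of j) := by
  have h := congrArg f (of_mul_of_mul_of hij)
  simp only [map_mul, mul_comm' (f (of j))] at h
  exact mul_left_cancel h

theorem map_of_eq [IsMulCommutative G] (f : BraidGroup n →* G) (i j : Fin (n - 1)) :
    f (of i) = f (of j) := by
  suffices h : ∀ k (hk : k < n - 1), f (of ⟨k, hk⟩) = f (of ⟨0, by omega⟩) from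
    (h i i.2).trans (h j j.2).symm
  intro k hk
  induction k with
  | zero => rfl
  | succ k ih => exact (map_of_succ f rfl).symm.trans (ih (by omega))

theorem isCyclic_of_surjective [IsMulCommutative G] {f : BraidGroup n →* G}
    (hf : Function.Surjective f) : IsCyclic G := by
  obtain ⟨a, ha⟩ : ∃ a, ∀ i, f (of i) = a := by
    rcases isEmpty_or_nonempty (Fin (n - 1)) with h | ⟨⟨i₀⟩⟩
    · exact ⟨1, h.elim⟩
    · exact ⟨_, fun i => map_of_eq f i i₀⟩
  refine isCyclic_iff_exists_zpowers_eq_top.2 ⟨a, top_le_iff.1 ?_⟩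
  rw [← f.range_eq_top.2 hf, f.range_eq_map, ← closure_range_of, MonoidHom.map_closure,
    Subgroup.closure_le]
  rintro _ ⟨_, ⟨i, rfl⟩, rfl⟩
  exact ha i ▸ Subgroup.mem_zpowers a

end BraidGroup

namespace Subgroup

variable {G : Type*} [Group G] {H : Subgroup G}

theorem le_center_of_card_eq_two [H.Normal] (hH : Nat.card H = 2) : H ≤ center G := by
  obtain ⟨y, -, hy⟩ := (Nat.card_eq_two_iff' (1 : H)).1 hH
  intro z hz
  refine mem_center_iff.2 fun g => ?_
  by_cases hz1 : z = 1
  · simp [hz1]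
  -- conjugation by `g` permutes the non-identity elements of `H`, and there is only one
  have hconj : g * z * g⁻¹ = z := by
    have h₁ := hy ⟨z, hz⟩ (by simpa [Subtype.ext_iff] using hz1)
    have h₂ := hy ⟨g * z * g⁻¹, Normal.conj_mem ‹_› z hz g⟩
      (by simpa [Subtype.ext_iff] using hz1)
    simpa [Subtype.ext_iff] using h₂.trans h₁.symm
  exact mul_inv_eq_iff_eq_mul.1 hconj

theorem normalCore_eq_bot_of_card_prime (hH : (Nat.card H).Prime) (hn : ¬ H.Normal) :
    H.normalCore = ⊥ := by
  have := Nat.finite_of_card_ne_zero hH.ne_zero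
  rcases (Nat.dvd_prime hH).1 (card_dvd_of_le H.normalCore_le) with h | h
  · exact card_eq_one.1 h
  · exact absurd (eq_of_le_of_card_ge H.normalCore_le h.ge ▸ H.normalCore_normal) hn

theorem nonempty_mulEquiv_perm_of_normalCore_eq_bot [Finite G] (hH : H.normalCore = ⊥)
    (hcard : Nat.card G = H.index.factorial) : Nonempty (G ≃* Equiv.Perm (Fin H.index)) := by
  let e : G ⧸ H ≃ Fin H.index := Finite.equivFinOfCardEq (index_eq_card H).symm
  let ψ : G →* Equiv.Perm (Fin H.index) :=
    (Equiv.permCongrHom e).toMonoidHom.comp (MulAction.toPermHom G (G ⧸ H))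
  have hinj : Function.Injective ψ := by
    refine (Equiv.permCongrHom e).injective.comp ?_
    rw [← MonoidHom.ker_eq_bot_iff, ← normalCore_eq_ker, hH]
  refine ⟨MulEquiv.ofBijective ψ ((Nat.bijective_iff_injective_and_card ψ).2 ⟨hinj, ?_⟩)⟩
  rw [hcard, Nat.card_perm, Nat.card_fin]

end Subgroup

section SmallOrder

variable {G : Type*} [Group G] [Finite G]

theorem isMulCommutative_of_card_lt_six (h : Nat.card G < 6) : IsMulCommutative G := by
  have hpos : 0 < Nat.card G := Nat.card_pos
  have of_prime {p : ℕ} (hp : p.Prime) (hG : Nat.card G = p) : IsMulCommutative G :=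
    have := Fact.mk hp
    have := isCyclic_of_prime_card hG
    IsCyclic.isMulCommutative
  obtain hG | hG | hG | hG | hG : Nat.card G = 1 ∨ Nat.card G = 2 ∨ Nat.card G = 3 ∨
      Nat.card G = 4 ∨ Nat.card G = 5 := by omega
  · have := (Nat.card_eq_one_iff_unique.1 hG).1
    exact .of_comm fun _ _ => Subsingleton.elim _ _
  · exact of_prime Nat.prime_two hG
  · exact of_prime Nat.prime_three hG
  · have := Fact.mk Nat.prime_two
    exact IsPGroup.isMulCommutative_of_card_eq_prime_sq (p := 2) hG
  · exact of_prime Nat.prime_five hG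

theorem isCyclic_of_mem_center_of_card_eq_mul {p q : ℕ} [Fact q.Prime] (hpq : p.Coprime q)
    (hcard : Nat.card G = p * q) {y : G} (hy : y ∈ Subgroup.center G) (hoy : orderOf y = p) :
    IsCyclic G := by
  obtain ⟨x, hx⟩ := exists_prime_orderOf_dvd_card' q (hcard ▸ dvd_mul_left q p)
  have hyx : Commute y x := (Subgroup.mem_center_iff.1 hy x).symm
  refine isCyclic_of_orderOf_eq_card (y * x) ?_
  rw [hyx.orderOf_mul_eq_mul_orderOf_of_coprime (by rwa [hoy, hx]), hoy, hx, hcard]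

theorem nonempty_mulEquiv_perm_fin_three_of_card_eq_six (h6 : Nat.card G = 6)
    (hG : ¬ IsCyclic G) : Nonempty (G ≃* Equiv.Perm (Fin 3)) := by
  have := Fact.mk Nat.prime_two
  have := Fact.mk Nat.prime_three
  obtain ⟨y, hy⟩ := exists_prime_orderOf_dvd_card' 2 (h6 ▸ by norm_num : 2 ∣ Nat.card G)
  set H := Subgroup.zpowers y
  have hH : Nat.card H = 2 := by rw [Nat.card_zpowers, hy]
  have hindex : H.index = 3 := by
    have := H.card_mul_index
    rw [hH, h6] at this
    omega
  have hn : ¬ H.Normal := fun _ =>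
    hG (isCyclic_of_mem_center_of_card_eq_mul (q := 3) (by norm_num) h6
      (Subgroup.le_center_of_card_eq_two hH (Subgroup.mem_zpowers y)) hy)
  have hcore := Subgroup.normalCore_eq_bot_of_card_prime (hH ▸ Nat.prime_two) hn
  exact hindex ▸
    Subgroup.nonempty_mulEquiv_perm_of_normalCore_eq_bot hcore (by rw [hindex, h6]; rfl)

end SmallOrder

/-- The smallest non-cyclic quotient of `B_4` has order at least `6`, and any
non-cyclic quotient of order `6` is isomorphic to `S_3`. -/
theorem braid_four_smallest_noncyclic_quotient
    (G : Type) [Group G] [Finite G]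
    (f : BraidGroup 4 →* G) (hf : Function.Surjective f) (hG : ¬ IsCyclic G) :
    6 ≤ Nat.card G ∧ (Nat.card G = 6 → Nonempty (G ≃* Equiv.Perm (Fin 3))) := by
  have hcomm : ¬ IsMulCommutative G := fun _ => hG (BraidGroup.isCyclic_of_surjective hf)
  refine ⟨?_, fun h6 => nonempty_mulEquiv_perm_fin_three_of_card_eq_six h6 hG⟩
  by_contra hlt
  exact hcomm (isMulCommutative_of_card_lt_six (by omega))
end

section
/- Let n ≥ 3 and let B_n be the braid group on n strands. For all 1 ≤ i < j < k ≤ n there exists ε ∈ {1, −1} such that the partial commutation relation ρ_{i,k} = ρ_{j,k}^ε * ρ_{i,j} * ρ_{j,k}^{−ε} holds among the Birman–Ko–Lee generators; in particular ρ_{i,k} is conjugate to ρ_{i,j} by a power of ρ_{j,k}. -/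
/-- The conjugating word `σ_{j-1} σ_{j-2} ⋯ σ_{i+1}` (1-indexed) appearing in the
definition of the Birman--Ko--Lee generators. -/
def bklWord (n i j : ℕ) : BraidGroup n :=
  ((List.range (j - i - 1)).map fun t => braidGen n (j - 1 - t)).prod

/-- The Birman--Ko--Lee generator `ρ_{i,j} = (σ_{j-1} ⋯ σ_{i+1}) σ_i (σ_{j-1} ⋯ σ_{i+1})⁻¹`
of the braid group `B_n` (1-indexed, `1 ≤ i < j ≤ n`).  Note `ρ_{i,i+1} = σ_i`. -/
def bklGen (n i j : ℕ) : BraidGroup n :=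
  bklWord n i j * braidGen n i * (bklWord n i j)⁻¹

/-! Conjugating by `σ_k` sends `ρ_{i,k}` to `ρ_{i,k+1}` and fixes `ρ_{i,j}` for `j < k`, since
`ρ_{i,j}` is a word in `σ_i, …, σ_{j-1}`. Induction on `k`, starting from `ρ_{j,j+1} = σ_j`,
therefore gives `ρ_{i,k} = ρ_{j,k} ρ_{i,j} ρ_{j,k}⁻¹`, i.e. the relation with `ε = 1`. -/

theorem braidGen_of_lt {n k : ℕ} (hk : k - 1 < n - 1) :
    braidGen n k = PresentedGroup.of (⟨k - 1, hk⟩ : Fin (n - 1)) :=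
  dif_pos hk

theorem braidGen_of_not_lt {n k : ℕ} (hk : ¬k - 1 < n - 1) : braidGen n k = 1 :=
  dif_neg hk

-- `braidGen n 0` is the junk value `σ_1` (as `0 - 1 = 0` in `ℕ`), which does not commute with `σ_2`.
theorem braidGen_commute {n a b : ℕ} (ha : 1 ≤ a) (hab : a + 2 ≤ b) :
    Commute (braidGen n a) (braidGen n b) := by
  by_cases ha' : a - 1 < n - 1
  swap
  · rw [braidGen_of_not_lt ha']
    exact Commute.one_left _
  by_cases hb' : b - 1 < n - 1
  swap
  · rw [braidGen_of_not_lt hb']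
    exact Commute.one_right _
  have hrel := PresentedGroup.mk_eq_mk_of_mul_inv_mem (rels := braidRels n)
    (Or.inr ⟨⟨a - 1, ha'⟩, ⟨b - 1, hb'⟩, by simp only; omega, rfl⟩)
  rw [braidGen_of_lt ha', braidGen_of_lt hb']
  simp only [map_mul] at hrel
  exact hrel

theorem bklWord_succ {n i j : ℕ} (hij : i < j) :
    bklWord n i (j + 1) = braidGen n j * bklWord n i j := by
  rw [bklWord, bklWord, show j + 1 - i - 1 = j - i - 1 + 1 by omega, List.range_succ_eq_map,
    List.map_cons, List.prod_cons, List.map_map]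
  congr 2
  refine List.map_congr_left fun t _ => ?_
  simp only [Function.comp_apply]
  congr 1
  omega

theorem bklGen_succ {n i j : ℕ} (hij : i < j) :
    bklGen n i (j + 1) = braidGen n j * bklGen n i j * (braidGen n j)⁻¹ := by
  rw [bklGen, bklGen, bklWord_succ hij]
  group

theorem bklGen_self_succ (n i : ℕ) : bklGen n i (i + 1) = braidGen n i := by
  simp [bklGen, bklWord]

theorem commute_braidGen_bklWord {n i j k : ℕ} (hjk : j < k) :
    Commute (braidGen n k) (bklWord n i j) := by
  refine Commute.list_prod_right _ _ fun x hx => ?_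
  obtain ⟨t, ht, rfl⟩ := List.mem_map.mp hx
  rw [List.mem_range] at ht
  exact (braidGen_commute (by omega) (by omega)).symm

theorem commute_braidGen_bklGen {n i j k : ℕ} (hi : 1 ≤ i) (hij : i < j) (hjk : j < k) :
    Commute (braidGen n k) (bklGen n i j) :=
  have hw := commute_braidGen_bklWord (n := n) (i := i) hjk
  (hw.mul_right (braidGen_commute hi (by omega)).symm).mul_right hw.inv_right

theorem bklGen_eq_conj {n i j k : ℕ} (hi : 1 ≤ i) (hij : i < j) (hjk : j < k) :
    bklGen n i k = bklGen n j k * bklGen n i j * (bklGen n j k)⁻¹ := by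
  induction k, hjk using Nat.le_induction with
  | base => rw [bklGen_self_succ, bklGen_succ hij]
  | succ k hjk ih =>
    calc bklGen n i (k + 1)
        = braidGen n k * (bklGen n j k * bklGen n i j * (bklGen n j k)⁻¹) * (braidGen n k)⁻¹ := by
          rw [bklGen_succ (by omega), ih]
      _ = (braidGen n k * bklGen n j k * (braidGen n k)⁻¹) *
            (braidGen n k * bklGen n i j * (braidGen n k)⁻¹) *
            (braidGen n k * bklGen n j k * (braidGen n k)⁻¹)⁻¹ := by group
      _ = bklGen n j (k + 1) * bklGen n i j * (bklGen n j (k + 1))⁻¹ := by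
          rw [(commute_braidGen_bklGen hi hij (by omega)).mul_inv_cancel, bklGen_succ (by omega)]

theorem bkl_partial_commutation_general
    (n : ℕ) (i j k : ℕ) (hi : 1 ≤ i) (hij : i < j) (hjk : j < k) :
    ∃ ε : ℤ, (ε = 1 ∨ ε = -1) ∧
      bklGen n i k = bklGen n j k ^ ε * bklGen n i j * (bklGen n j k ^ ε)⁻¹ :=
  ⟨1, Or.inl rfl, by simpa only [zpow_one] using bklGen_eq_conj hi hij hjk⟩

/-- For `n ≥ 3` and `1 ≤ i < j < k ≤ n`, the partial commutation relation
`ρ_{i,k} = ρ_{j,k}^ε ρ_{i,j} ρ_{j,k}^{-ε}` holds for some `ε ∈ {1, -1}`. -/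
theorem bkl_partial_commutation
    (n : ℕ) (hn : 3 ≤ n) (i j k : ℕ) (hi : 1 ≤ i) (hij : i < j) (hjk : j < k)
    (hk : k ≤ n) :
    ∃ ε : ℤ, (ε = 1 ∨ ε = -1) ∧
      bklGen n i k = bklGen n j k ^ ε * bklGen n i j * (bklGen n j k ^ ε)⁻¹ :=
  bkl_partial_commutation_general n i j k hi hij hjk
end
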